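/- arXiv:2208.12982 — 3 statements merged into one kernel-verified Lean document; each statement's English description precedes it below -/
import Mathlib

section
/- Let α: (B,Y) → (A,X) be a morphism of piles and let K = Ker(α). Then the quotient maps B → B/K and Y → Y/K (the orbit space of the K-action) constitute an epimorphism of piles π: (B,Y) → (B/K, Y/K), and there is a unique morphism of piles ᾱ: (B/K, Y/K) → (A,X) with α = ᾱ ∘ π. Moreover, α is a rigid epimorphism if and only if ᾱ is an isomorphism of piles and K ∩ B_y = 1 for every y ∈ Y. -/
open Pointwise

/-- A pile `(G,T)`: a profinite group `G`, a profinite space `T`, and a continuous action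
of `G` on `T`. -/
structure Pile : Type 1 where
  G : Type
  T : Type
  [grp : Group G]
  [topG : TopologicalSpace G]
  [tgG : IsTopologicalGroup G]
  [cG : CompactSpace G]
  [h2G : T2Space G]
  [tdG : TotallyDisconnectedSpace G]
  [topT : TopologicalSpace T]
  [cT : CompactSpace T]
  [h2T : T2Space T]
  [tdT : TotallyDisconnectedSpace T]
  [act : MulAction G T]
  [csmul : ContinuousSMul G T]

attribute [instance] Pile.grp Pile.topG Pile.tgG Pile.cG Pile.h2G Pile.tdG
  Pile.topT Pile.cT Pile.h2T Pile.tdT Pile.act Pile.csmul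

/-- A pile is finite if both its group and its space are finite. -/
def Pile.IsFinite (P : Pile) : Prop := Finite P.G ∧ Finite P.T

/-- A morphism of piles: a continuous group homomorphism together with a continuous
equivariant map of the spaces. -/
structure PileHom (P Q : Pile) where
  toGrp : P.G →* Q.G
  contGrp : Continuous toGrp
  toSp : P.T → Q.T
  contSp : Continuous toSp
  equivariant : ∀ (g : P.G) (t : P.T), toSp (g • t) = toGrp g • toSp t

/-- Composition of pile morphisms. -/
def PileHom.comp {P Q R : Pile} (g : PileHom Q R) (f : PileHom P Q) : PileHom P R where
  toGrp := g.toGrp.comp f.toGrp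
  contGrp := g.contGrp.comp f.contGrp
  toSp := g.toSp ∘ f.toSp
  contSp := g.contSp.comp f.contSp
  equivariant := fun a t => by
    simp [Function.comp, f.equivariant, g.equivariant]

/-- A pile morphism is an epimorphism if it is surjective on groups and spaces and for
every point `x` of the target space there is a point `y` above it whose stabilizer maps
onto the stabilizer of `x`. -/
def PileHom.IsEpi {P Q : Pile} (f : PileHom P Q) : Prop :=
  Function.Surjective f.toGrp ∧ Function.Surjective f.toSp ∧
  ∀ x : Q.T, ∃ y : P.T, f.toSp y = x ∧
    (MulAction.stabilizer P.G y).map f.toGrp = MulAction.stabilizer Q.G x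

/-- The induced map of orbit spaces. -/
def PileHom.orbitMap {P Q : Pile} (f : PileHom P Q) :
    Quotient (MulAction.orbitRel P.G P.T) → Quotient (MulAction.orbitRel Q.G Q.T) :=
  Quotient.lift (fun t => Quotient.mk (MulAction.orbitRel Q.G Q.T) (f.toSp t))
    (fun t₁ t₂ h => Quotient.sound (by
      obtain ⟨g, hg⟩ := MulAction.mem_orbit_iff.mp h
      exact MulAction.mem_orbit_iff.mpr ⟨f.toGrp g, by rw [← hg, f.equivariant]⟩))

/-- A pile morphism is a rigid epimorphism if it is an epimorphism, maps each point
stabilizer isomorphically onto the stabilizer of the image point, and induces a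
homeomorphism of the orbit spaces. -/
def PileHom.IsRigid {P Q : Pile} (f : PileHom P Q) : Prop :=
  f.IsEpi ∧
  (∀ y : P.T, Set.InjOn f.toGrp (MulAction.stabilizer P.G y) ∧
    (MulAction.stabilizer P.G y).map f.toGrp = MulAction.stabilizer Q.G (f.toSp y)) ∧
  IsHomeomorph f.orbitMap

/-- An isomorphism of piles: the group component is an isomorphism of topological groups
and the space component is an (equivariant) homeomorphism. -/
def PileHom.IsIso {P Q : Pile} (f : PileHom P Q) : Prop :=
  IsHomeomorph (⇑f.toGrp) ∧ IsHomeomorph f.toSp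

theorem auxT2 {Z : Type*} [TopologicalSpace Z] [TotallySeparatedSpace Z] : T2Space Z := by
  constructor
  intro x y hxy
  obtain ⟨U, hU, hx, hy⟩ := exists_isClopen_of_totally_separated hxy
  exact ⟨U, Uᶜ, hU.2, hU.compl.2, hx, hy, disjoint_compl_right⟩

theorem auxExistsClopen {X : Type*} [TopologicalSpace X] [CompactSpace X] [T2Space X]
    [TotallyDisconnectedSpace X] {C U : Set X} (hC : IsCompact C) (hU : IsOpen U)
    (hCU : C ⊆ U) : ∃ V : Set X, IsClopen V ∧ C ⊆ V ∧ V ⊆ U := by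
  have h : ∀ x : C, ∃ V : Set X, IsClopen V ∧ (x : X) ∈ V ∧ V ⊆ U := fun x =>
    compact_exists_isClopen_in_isOpen hU (hCU x.2)
  choose V hV hxV hVU using h
  obtain ⟨s, hs⟩ := hC.elim_finite_subcover V (fun x => (hV x).2)
    (fun x hx => Set.mem_iUnion.2 ⟨⟨x, hx⟩, hxV _⟩)
  exact ⟨⋃ i ∈ s, V i, isClopen_biUnion_finset fun i _ => hV i, hs,
    Set.iUnion₂_subset fun i _ => hVU i⟩

theorem auxTotSep {X Z : Type*} [TopologicalSpace X] [TopologicalSpace Z] [CompactSpace X]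
    [T2Space X] [TotallyDisconnectedSpace X] {f : X → Z}
    (hs : Function.Surjective f) (ho : IsOpenMap f) (hcl : IsClosedMap f)
    (hfib : ∀ z : Z, IsClosed (f ⁻¹' {z})) : TotallySeparatedSpace Z := by
  rw [totallySeparatedSpace_iff_exists_isClopen]
  intro z1 z2 hne
  have hdisj : f ⁻¹' {z1} ⊆ (f ⁻¹' {z2})ᶜ := by
    intro x hx hx2
    exact hne (hx.symm.trans hx2)
  obtain ⟨V, hV, h1V, hV2⟩ := auxExistsClopen (hfib z1).isCompact
    (hfib z2).isOpen_compl hdisj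
  refine ⟨f '' V, ⟨hcl V hV.1, ho V hV.2⟩, ?_, ?_⟩
  · obtain ⟨x, rfl⟩ := hs z1
    exact ⟨x, h1V rfl, rfl⟩
  · rintro ⟨v, hv, hfv⟩
    exact hV2 hv hfv

section OrbitQuot

variable {G T : Type*} [Group G] [TopologicalSpace G] [CompactSpace G]
  [TopologicalSpace T] [CompactSpace T] [T2Space T] [TotallyDisconnectedSpace T]
  [MulAction G T] [ContinuousSMul G T]

theorem auxOrbitCompact (t : T) : IsCompact (MulAction.orbit G t) :=
  isCompact_range (continuous_id.smul continuous_const)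

theorem auxOrbitQuotClosedMap : IsClosedMap (Quotient.mk (MulAction.orbitRel G T)) := by
  intro C hC
  rw [← (MulAction.isOpenQuotientMap_quotientMk (Γ := G)).isQuotientMap.isClosed_preimage]
  have heq : (Quotient.mk (MulAction.orbitRel G T)) ⁻¹'
      ((Quotient.mk (MulAction.orbitRel G T)) '' C) =
      (fun p : G × T => p.1 • p.2) '' (Set.univ ×ˢ C) := by
    ext x
    simp only [Set.mem_preimage, Set.mem_image, Set.mem_prod, Set.mem_univ, true_and,
      Prod.exists]
    constructor
    · rintro ⟨c, hc, hxc⟩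
      obtain ⟨g, hg⟩ := MulAction.mem_orbit_iff.mp (Quotient.exact hxc.symm)
      exact ⟨g, c, hc, hg⟩
    · rintro ⟨g, c, hc, rfl⟩
      exact ⟨c, hc, Quotient.sound (MulAction.mem_orbit_iff.mpr ⟨g, rfl⟩) |>.symm⟩
  rw [heq]
  exact ((isCompact_univ.prod hC.isCompact).image continuous_smul).isClosed

theorem auxOrbitQuotFiberClosed (z : Quotient (MulAction.orbitRel G T)) :
    IsClosed ((Quotient.mk (MulAction.orbitRel G T)) ⁻¹' {z}) := by
  obtain ⟨t, rfl⟩ := Quotient.exists_rep z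
  have heq : (Quotient.mk (MulAction.orbitRel G T)) ⁻¹' {⟦t⟧} = MulAction.orbit G t := by
    ext y
    simp only [Set.mem_preimage, Set.mem_singleton_iff]
    rw [Quotient.eq]
    exact Iff.rfl
  rw [heq]
  exact (auxOrbitCompact t).isClosed

theorem auxOrbitQuotTotSep : TotallySeparatedSpace (Quotient (MulAction.orbitRel G T)) :=
  auxTotSep (fun q => Quotient.exists_rep q)
    (MulAction.isOpenQuotientMap_quotientMk (Γ := G)).isOpenMap
    auxOrbitQuotClosedMap auxOrbitQuotFiberClosed

end OrbitQuot

lemma PileHom.ext' {P Q : Pile} {f g : PileHom P Q} (h1 : f.toGrp = g.toGrp)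
    (h2 : f.toSp = g.toSp) : f = g := by
  cases f; cases g
  simp only at h1 h2
  subst h1; subst h2
  rfl

section QConstr

variable (B A : Pile) (α : PileHom B A)

lemma ker_closed : IsClosed ((α.toGrp.ker : Subgroup B.G) : Set B.G) := by
  have : ((α.toGrp.ker : Subgroup B.G) : Set B.G) = α.toGrp ⁻¹' {1} := by
    ext g; simp [MonoidHom.mem_ker]
  rw [this]
  exact isClosed_singleton.preimage α.contGrp

lemma ker_compactSpace : CompactSpace ↥α.toGrp.ker :=
  isCompact_iff_compactSpace.mp (ker_closed B A α).isCompact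

lemma qGrpTotSep : TotallySeparatedSpace (B.G ⧸ α.toGrp.ker) := by
  refine auxTotSep QuotientGroup.mk_surjective QuotientGroup.isOpenMap_coe ?_ ?_
  · intro C hC
    rw [← (QuotientGroup.isQuotientMap_mk _).isClosed_preimage,
      QuotientGroup.preimage_image_mk_eq_mul]
    exact (hC.isCompact.mul (ker_closed B A α).isCompact).isClosed
  · intro z
    obtain ⟨g, rfl⟩ := QuotientGroup.mk_surjective z
    have : ((QuotientGroup.mk : B.G → B.G ⧸ α.toGrp.ker) ⁻¹' {QuotientGroup.mk g})
        = (fun x => x⁻¹ * g) ⁻¹' (α.toGrp.ker : Set B.G) := by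
      ext x
      simp only [Set.mem_preimage, Set.mem_singleton_iff, SetLike.mem_coe]
      exact QuotientGroup.eq
    rw [this]
    exact (ker_closed B A α).preimage (continuous_inv.mul continuous_const)

/-- the `K`-orbit space of `Y`. -/
abbrev qSp := Quotient (MulAction.orbitRel ↥α.toGrp.ker B.T)

lemma qSpTotSep : TotallySeparatedSpace (qSp B A α) := by
  haveI := ker_compactSpace B A α
  exact auxOrbitQuotTotSep

/-- The action of `B.G ⧸ K` on `Y/K`. -/
def qSmul : B.G ⧸ α.toGrp.ker → qSp B A α → qSp B A α := fun gq =>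
  Quotient.liftOn' gq
    (fun g => Quotient.map' (fun y => g • y) (by
      rintro y y' hyy'
      obtain ⟨k, hk⟩ := MulAction.mem_orbit_iff.mp hyy'
      refine MulAction.mem_orbit_iff.mpr ⟨⟨g * (k : B.G) * g⁻¹, ?_⟩, ?_⟩
      · have hkk := k.2
        simp only [MonoidHom.mem_ker] at hkk ⊢
        simp [hkk]
      · show (g * (k : B.G) * g⁻¹) • (g • y') = g • y
        rw [smul_smul, mul_assoc, inv_mul_cancel, mul_one, ← smul_smul]
        exact congrArg (fun z => g • z) hk))
    (by
      intro g g' hgg'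
      have hmem : g⁻¹ * g' ∈ α.toGrp.ker := QuotientGroup.leftRel_apply.mp hgg'
      have hval : α.toGrp g = α.toGrp g' := by
        rw [MonoidHom.mem_ker, map_mul, map_inv, inv_mul_eq_one] at hmem
        exact hmem
      funext tq
      refine Quotient.inductionOn' tq (fun y => ?_)
      show Quotient.mk'' (g • y) = Quotient.mk'' (g' • y)
      refine Quotient.sound' (MulAction.mem_orbit_iff.mpr ⟨⟨g * g'⁻¹, ?_⟩, ?_⟩)
      · rw [MonoidHom.mem_ker, map_mul, map_inv, hval, mul_inv_cancel]
      · show (g * g'⁻¹) • (g' • y) = g • y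
        rw [smul_smul, mul_assoc, inv_mul_cancel, mul_one])

lemma qSmul_mk (g : B.G) (y : B.T) :
    qSmul B A α (QuotientGroup.mk g) (Quotient.mk _ y) = Quotient.mk _ (g • y) := rfl

/-- The action as a `MulAction`. -/
def qAction : MulAction (B.G ⧸ α.toGrp.ker) (qSp B A α) where
  smul := qSmul B A α
  one_smul := fun tq => Quotient.inductionOn' tq fun y => by
    show qSmul B A α (QuotientGroup.mk 1) (Quotient.mk _ y) = Quotient.mk _ y
    rw [qSmul_mk, one_smul]
  mul_smul := fun gq hq tq => by
    refine Quotient.inductionOn' gq fun g => ?_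
    refine Quotient.inductionOn' hq fun h => ?_
    refine Quotient.inductionOn' tq fun y => ?_
    show qSmul B A α (QuotientGroup.mk (g * h)) (Quotient.mk _ y) =
      qSmul B A α (QuotientGroup.mk g) (qSmul B A α (QuotientGroup.mk h) (Quotient.mk _ y))
    rw [qSmul_mk, qSmul_mk, qSmul_mk, mul_smul]

lemma qSmul_continuous :
    Continuous (fun p : (B.G ⧸ α.toGrp.ker) × qSp B A α => qSmul B A α p.1 p.2) := by
  haveI := ker_compactSpace B A α
  rw [← (QuotientGroup.isOpenQuotientMap_mk.prodMap
    (MulAction.isOpenQuotientMap_quotientMk (Γ := ↥α.toGrp.ker))).continuous_comp_iff]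
  exact continuous_quot_mk.comp continuous_smul

/-- The quotient pile `(B/K, Y/K)`. -/
def qPile : Pile where
  G := B.G ⧸ α.toGrp.ker
  T := qSp B A α
  h2G := @auxT2 _ _ (qGrpTotSep B A α)
  tdG := @TotallySeparatedSpace.totallyDisconnectedSpace _ _ (qGrpTotSep B A α)
  h2T := @auxT2 _ _ (qSpTotSep B A α)
  tdT := @TotallySeparatedSpace.totallyDisconnectedSpace _ _ (qSpTotSep B A α)
  act := qAction B A α
  csmul := @ContinuousSMul.mk _ _ (qAction B A α).toSMul _ _ (qSmul_continuous B A α)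

/-- The projection `(B,Y) → (B/K, Y/K)`. -/
def qPi : PileHom B (qPile B A α) where
  toGrp := QuotientGroup.mk' α.toGrp.ker
  contGrp := continuous_quot_mk
  toSp := Quotient.mk _
  contSp := continuous_quot_mk
  equivariant := fun _ _ => rfl

/-- The induced morphism `(B/K, Y/K) → (A,X)`. -/
def qBar : PileHom (qPile B A α) A where
  toGrp := QuotientGroup.lift α.toGrp.ker α.toGrp le_rfl
  contGrp := by
    exact (QuotientGroup.isQuotientMap_mk α.toGrp.ker).continuous_iff.mpr α.contGrp
  toSp := Quotient.lift (fun y => α.toSp y) (by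
    intro y y' h
    obtain ⟨k, hk⟩ := MulAction.mem_orbit_iff.mp h
    have : α.toSp ((k : B.G) • y') = α.toSp y := congrArg _ hk
    rw [α.equivariant] at this
    show α.toSp y = α.toSp y'
    rw [← this]
    have hk1 : α.toGrp (k : B.G) = 1 := k.2
    rw [hk1, one_smul])
  contSp := α.contSp.quotient_lift _
  equivariant := fun gq tq => by
    refine Quotient.inductionOn' gq fun g => ?_
    refine Quotient.inductionOn' tq fun y => ?_
    exact α.equivariant g y


lemma qPi_toGrp_surj : Function.Surjective (qPi B A α).toGrp :=
  QuotientGroup.mk'_surjective _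

lemma qPi_toSp_surj : Function.Surjective (qPi B A α).toSp :=
  fun q => Quotient.exists_rep q

lemma qPi_fiber (y y' : B.T) :
    (qPi B A α).toSp y = (qPi B A α).toSp y' ↔ ∃ k ∈ α.toGrp.ker, k • y = y' := by
  constructor
  · intro h
    obtain ⟨k, hk⟩ := MulAction.mem_orbit_iff.mp (Quotient.exact h)
    refine ⟨(k : B.G)⁻¹, inv_mem k.2, ?_⟩
    rw [← hk]
    show ((k : B.G))⁻¹ • ((k : B.G) • y') = y'
    exact inv_smul_smul _ _
  · rintro ⟨k, hkK, rfl⟩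
    refine Quotient.sound (MulAction.mem_orbit_iff.mpr ⟨⟨k⁻¹, inv_mem hkK⟩, ?_⟩)
    show k⁻¹ • (k • y) = y
    exact inv_smul_smul _ _

lemma qPi_stab (y : B.T) :
    (MulAction.stabilizer B.G y).map (qPi B A α).toGrp
      = MulAction.stabilizer (qPile B A α).G ((qPi B A α).toSp y) := by
  ext gq
  rw [Subgroup.mem_map]
  constructor
  · rintro ⟨s, hs, rfl⟩
    rw [MulAction.mem_stabilizer_iff, ← (qPi B A α).equivariant]
    rw [MulAction.mem_stabilizer_iff] at hs
    rw [hs]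
  · intro hgq
    obtain ⟨g, rfl⟩ := QuotientGroup.mk'_surjective α.toGrp.ker gq
    replace hgq := MulAction.mem_stabilizer_iff.mp hgq
    have hgy : (qPi B A α).toSp (g • y) = (qPi B A α).toSp y := by
      rw [(qPi B A α).equivariant]; exact hgq
    obtain ⟨k, hkK, hk⟩ := (qPi_fiber B A α _ _).mp hgy
    refine ⟨k * g, ?_, ?_⟩
    · rw [MulAction.mem_stabilizer_iff, mul_smul]; exact hk
    · show QuotientGroup.mk (k * g) = QuotientGroup.mk g
      rw [QuotientGroup.eq, MonoidHom.mem_ker]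
      simp [map_mul, map_inv, MonoidHom.mem_ker.mp hkK]

lemma qPi_epi : (qPi B A α).IsEpi := by
  refine ⟨qPi_toGrp_surj B A α, qPi_toSp_surj B A α, fun x => ?_⟩
  obtain ⟨y, rfl⟩ := qPi_toSp_surj B A α x
  exact ⟨y, rfl, qPi_stab B A α y⟩

lemma qBar_comp : (qBar B A α).comp (qPi B A α) = α := by
  refine PileHom.ext' ?_ ?_
  · exact MonoidHom.ext fun g => rfl
  · funext y; rfl

end QConstr

/-- Let `α : (B,Y) → (A,X)` be a morphism of piles with kernel `K`. Then the quotient maps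
`B → B/K` and `Y → Y/K` constitute an epimorphism of piles `π : (B,Y) → (B/K, Y/K)` (here
realized as an epimorphism `π` onto a pile `Q` whose group component is surjective with
kernel `K` and whose space component is surjective with fibers exactly the `K`-orbits),
and there is a unique morphism of piles `ᾱ : (B/K, Y/K) → (A,X)` with `α = ᾱ ∘ π`.
Moreover, `α` is a rigid epimorphism if and only if `ᾱ` is an isomorphism of piles and
`K ∩ B_y = 1` for every `y ∈ Y`. -/
theorem quotient_pile_factorization
    (B A : Pile) (α : PileHom B A) :
    ∃ (Q : Pile) (π : PileHom B Q),
      Function.Surjective π.toGrp ∧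
      π.toGrp.ker = α.toGrp.ker ∧
      Function.Surjective π.toSp ∧
      (∀ y y' : B.T, π.toSp y = π.toSp y' ↔ ∃ k ∈ α.toGrp.ker, k • y = y') ∧
      π.IsEpi ∧
      ∃ αbar : PileHom Q A,
        αbar.comp π = α ∧
        (∀ αbar' : PileHom Q A, αbar'.comp π = α → αbar' = αbar) ∧
        (α.IsRigid ↔ (αbar.IsIso ∧
          ∀ y : B.T, α.toGrp.ker ⊓ MulAction.stabilizer B.G y = ⊥)) := by
  refine ⟨qPile B A α, qPi B A α, qPi_toGrp_surj B A α, QuotientGroup.ker_mk' _,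
    qPi_toSp_surj B A α, qPi_fiber B A α, qPi_epi B A α, qBar B A α, qBar_comp B A α, ?_, ?_⟩
  · -- uniqueness
    intro αbar' h
    refine PileHom.ext' ?_ ?_
    · refine MonoidHom.ext fun gq => ?_
      refine Quotient.inductionOn' gq fun g => ?_
      have h1 : (αbar'.comp (qPi B A α)).toGrp g = α.toGrp g := by rw [h]
      have h2 : ((qBar B A α).comp (qPi B A α)).toGrp g = α.toGrp g := by rw [qBar_comp]
      exact h1.trans h2.symm
    · funext tq
      refine Quotient.inductionOn' tq fun y => ?_
      have h1 : (αbar'.comp (qPi B A α)).toSp y = α.toSp y := by rw [h]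
      have h2 : ((qBar B A α).comp (qPi B A α)).toSp y = α.toSp y := by rw [qBar_comp]
      exact h1.trans h2.symm
  · constructor
    · -- rigid → iso ∧ trivial intersections
      rintro ⟨hepi, hstab, horb⟩
      refine ⟨⟨?_, ?_⟩, ?_⟩
      · -- group component is a homeomorphism
        rw [isHomeomorph_iff_continuous_bijective]
        refine ⟨(qBar B A α).contGrp, ?_, ?_⟩
        · intro gq gq' hgg
          obtain ⟨g, rfl⟩ := QuotientGroup.mk_surjective gq
          obtain ⟨g', rfl⟩ := QuotientGroup.mk_surjective gq'
          have hα : α.toGrp g = α.toGrp g' := hgg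
          show (QuotientGroup.mk g : B.G ⧸ α.toGrp.ker) = QuotientGroup.mk g'
          rw [QuotientGroup.eq, MonoidHom.mem_ker, map_mul, map_inv, hα, inv_mul_cancel]
        · intro a
          obtain ⟨g, hg⟩ := hepi.1 a
          exact ⟨QuotientGroup.mk g, hg⟩
      · -- space component is a homeomorphism
        rw [isHomeomorph_iff_continuous_bijective]
        refine ⟨(qBar B A α).contSp, ?_, ?_⟩
        · intro tq tq' h
          obtain ⟨y, rfl⟩ := Quotient.exists_rep tq
          obtain ⟨y', rfl⟩ := Quotient.exists_rep tq'
          have hxy : α.toSp y = α.toSp y' := h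
          have hinj : Function.Injective α.orbitMap := horb.3.1
          have horbeq : (Quotient.mk (MulAction.orbitRel B.G B.T) y)
              = Quotient.mk (MulAction.orbitRel B.G B.T) y' := by
            apply hinj
            show (Quotient.mk (MulAction.orbitRel A.G A.T) (α.toSp y))
              = Quotient.mk (MulAction.orbitRel A.G A.T) (α.toSp y')
            rw [hxy]
          obtain ⟨b, hb⟩ := MulAction.mem_orbit_iff.mp (Quotient.exact horbeq)
          have hab : α.toGrp b ∈ MulAction.stabilizer A.G (α.toSp y') := by
            rw [MulAction.mem_stabilizer_iff, ← α.equivariant, hb, hxy]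
          rw [← (hstab y').2] at hab
          obtain ⟨s, hs, hsb⟩ := Subgroup.mem_map.mp hab
          refine Quotient.sound (MulAction.mem_orbit_iff.mpr ⟨⟨b * s⁻¹, ?_⟩, ?_⟩)
          · rw [MonoidHom.mem_ker, map_mul, map_inv, hsb, mul_inv_cancel]
          · show (b * s⁻¹) • y' = y
            rw [MulAction.mem_stabilizer_iff] at hs
            have hsy : s⁻¹ • y' = y' := by rw [inv_smul_eq_iff]; exact hs.symm
            rw [mul_smul, hsy]
            exact hb
        · intro x
          obtain ⟨y, hy⟩ := hepi.2.1 x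
          exact ⟨Quotient.mk _ y, hy⟩
      · -- trivial intersections
        intro y
        rw [eq_bot_iff]
        intro k hk
        have h1 : α.toGrp k = α.toGrp 1 := by
          rw [map_one]
          exact MonoidHom.mem_ker.mp hk.1
        have h2 : k = 1 := (hstab y).1 hk.2 (one_mem _) h1
        rw [Subgroup.mem_bot]
        exact h2
    · -- iso ∧ trivial intersections → rigid
      rintro ⟨⟨hgrp, hsp⟩, htriv⟩
      have hGsurj : Function.Surjective α.toGrp := by
        intro a
        obtain ⟨gq, hgq⟩ := hgrp.3.2 a
        obtain ⟨g, rfl⟩ := QuotientGroup.mk_surjective gq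
        exact ⟨g, hgq⟩
      have hSsurj : Function.Surjective α.toSp := by
        intro x
        obtain ⟨tq, htq⟩ := hsp.3.2 x
        obtain ⟨y, rfl⟩ := Quotient.exists_rep tq
        exact ⟨y, htq⟩
      have hSpInj : ∀ y y' : B.T, α.toSp y = α.toSp y' → ∃ k ∈ α.toGrp.ker, k • y = y' := by
        intro y y' h
        have h' : (qPi B A α).toSp y = (qPi B A α).toSp y' := hsp.3.1 h
        exact (qPi_fiber B A α y y').mp h'
      have hstar : ∀ y : B.T, (MulAction.stabilizer B.G y).map α.toGrp
          = MulAction.stabilizer A.G (α.toSp y) := by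
        intro y
        ext a
        rw [Subgroup.mem_map]
        constructor
        · rintro ⟨s, hs, rfl⟩
          rw [MulAction.mem_stabilizer_iff, ← α.equivariant]
          rw [MulAction.mem_stabilizer_iff] at hs
          rw [hs]
        · intro ha
          obtain ⟨g, rfl⟩ := hGsurj a
          have hgy : α.toSp (g • y) = α.toSp y := by
            rw [α.equivariant]
            exact ha
          obtain ⟨k, hkK, hk⟩ := hSpInj _ _ hgy
          refine ⟨k * g, ?_, ?_⟩
          · rw [MulAction.mem_stabilizer_iff, mul_smul]; exact hk
          · rw [map_mul, MonoidHom.mem_ker.mp hkK, one_mul]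
      refine ⟨⟨hGsurj, hSsurj, fun x => ?_⟩, fun y => ⟨?_, hstar y⟩, ?_⟩
      · obtain ⟨y, rfl⟩ := hSsurj x
        exact ⟨y, rfl, hstar y⟩
      · -- injectivity on the stabilizer
        intro s hs s' hs' hss
        have hsS : s ∈ MulAction.stabilizer B.G y := hs
        have hsS' : s' ∈ MulAction.stabilizer B.G y := hs'
        have hmem : s⁻¹ * s' ∈ α.toGrp.ker ⊓ MulAction.stabilizer B.G y := by
          rw [Subgroup.mem_inf]
          constructor
          · rw [MonoidHom.mem_ker, map_mul, map_inv, ← hss, inv_mul_cancel]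
          · exact mul_mem (inv_mem hsS) hsS'
        rw [htriv y, Subgroup.mem_bot] at hmem
        exact inv_mul_eq_one.mp hmem
      · -- orbit map is a homeomorphism
        haveI : T2Space (Quotient (MulAction.orbitRel A.G A.T)) :=
          @auxT2 _ _ auxOrbitQuotTotSep
        rw [isHomeomorph_iff_continuous_bijective]
        refine ⟨(continuous_quot_mk.comp α.contSp).quotient_lift _, ?_, ?_⟩
        · intro tq tq' h
          obtain ⟨y, rfl⟩ := Quotient.exists_rep tq
          obtain ⟨y', rfl⟩ := Quotient.exists_rep tq'
          have h' : (Quotient.mk (MulAction.orbitRel A.G A.T) (α.toSp y))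
              = Quotient.mk (MulAction.orbitRel A.G A.T) (α.toSp y') := h
          obtain ⟨a, ha⟩ := MulAction.mem_orbit_iff.mp (Quotient.exact h')
          obtain ⟨b, rfl⟩ := hGsurj a
          have hby : α.toSp (b • y') = α.toSp y := by
            rw [α.equivariant]; exact ha
          obtain ⟨k, hkK, hk⟩ := hSpInj _ _ hby
          refine Quotient.sound (MulAction.mem_orbit_iff.mpr ⟨k * b, ?_⟩)
          rw [mul_smul]; exact hk
        · intro xq
          obtain ⟨x, rfl⟩ := Quotient.exists_rep xq
          obtain ⟨y, rfl⟩ := hSsurj x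
          exact ⟨Quotient.mk _ y, rfl⟩
end

section
/- Let α: (B,Y) → (A,X) and φ₀: (Â,X̂) → (A,X) be morphisms of piles, and form the fiber product pile (B̂,Ŷ) with B̂ = B ×_A Â = {(b,â) | α(b) = φ₀(â)} acting coordinatewise on Ŷ = Y ×_X X̂ = {(y,x̂) | α(y) = φ₀(x̂)}, with coordinate projections p: (B̂,Ŷ) → (B,Y) and α̂: (B̂,Ŷ) → (Â,X̂). If α is a rigid epimorphism, then α̂ is a rigid epimorphism. -/
open Pointwise

/-- The commutative square formed by `p : B̂ → B`, `α̂ : B̂ → Â`, `α : B → A`, `φ₀ : Â → A`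
is cartesian: it commutes and `B̂` (both on groups and on spaces) maps bijectively onto the
fiber product `B ×_A Â` (resp. `Y ×_X X̂`). -/
def IsCartesianSquare {Bhat B Ahat A : Pile} (p : PileHom Bhat B) (αhat : PileHom Bhat Ahat)
    (α : PileHom B A) (φ₀ : PileHom Ahat A) : Prop :=
  α.comp p = φ₀.comp αhat ∧
  Function.Injective (fun b : Bhat.G => (p.toGrp b, αhat.toGrp b)) ∧
  (∀ (b : B.G) (a : Ahat.G), α.toGrp b = φ₀.toGrp a →
    ∃ c : Bhat.G, p.toGrp c = b ∧ αhat.toGrp c = a) ∧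
  Function.Injective (fun y : Bhat.T => (p.toSp y, αhat.toSp y)) ∧
  (∀ (y : B.T) (x : Ahat.T), α.toSp y = φ₀.toSp x →
    ∃ z : Bhat.T, p.toSp z = y ∧ αhat.toSp z = x)

/-- Let `α : (B,Y) → (A,X)` and `φ₀ : (Â,X̂) → (A,X)` be morphisms of piles and let
`(B̂,Ŷ)` be the fiber product pile, with coordinate projections `p` and `α̂`. If `α` is a
rigid epimorphism, then so is `α̂`. -/
theorem rigid_of_cartesian
    (Bhat B Ahat A : Pile) (p : PileHom Bhat B) (αhat : PileHom Bhat Ahat)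
    (α : PileHom B A) (φ₀ : PileHom Ahat A)
    (hcart : IsCartesianSquare p αhat α φ₀)
    (hα : α.IsRigid) :
    αhat.IsRigid := by
  obtain ⟨hcomm, hGinj, hGsurj, hTinj, hTsurj⟩ := hcart
  obtain ⟨⟨hαG, hαT, _⟩, hstab, hhomeo⟩ := hα
  have hcommG : ∀ b : Bhat.G, α.toGrp (p.toGrp b) = φ₀.toGrp (αhat.toGrp b) := fun b =>
    DFunLike.congr_fun (congrArg PileHom.toGrp hcomm) b
  have hcommT : ∀ z : Bhat.T, α.toSp (p.toSp z) = φ₀.toSp (αhat.toSp z) := fun z =>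
    congrFun (congrArg PileHom.toSp hcomm) z
  -- surjectivity on groups
  have hsurjG : Function.Surjective αhat.toGrp := by
    intro a
    obtain ⟨b, hb⟩ := hαG (φ₀.toGrp a)
    obtain ⟨c, _, hc2⟩ := hGsurj b a hb
    exact ⟨c, hc2⟩
  -- surjectivity on spaces
  have hsurjT : Function.Surjective αhat.toSp := by
    intro x
    obtain ⟨y, hy⟩ := hαT (φ₀.toSp x)
    obtain ⟨z, _, hz2⟩ := hTsurj y x hy
    exact ⟨z, hz2⟩
  -- key stabilizer facts for every point of Bhat.T
  have key : ∀ z : Bhat.T,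
      Set.InjOn αhat.toGrp (MulAction.stabilizer Bhat.G z) ∧
      (MulAction.stabilizer Bhat.G z).map αhat.toGrp
        = MulAction.stabilizer Ahat.G (αhat.toSp z) := by
    intro z
    obtain ⟨hinjα, hmapα⟩ := hstab (p.toSp z)
    constructor
    · intro g₁ hg₁ g₂ hg₂ heq
      have hg₁' : g₁ • z = z := hg₁
      have hg₂' : g₂ • z = z := hg₂
      have hp₁ : p.toGrp g₁ ∈ MulAction.stabilizer B.G (p.toSp z) := by
        rw [MulAction.mem_stabilizer_iff, ← p.equivariant, hg₁']
      have hp₂ : p.toGrp g₂ ∈ MulAction.stabilizer B.G (p.toSp z) := by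
        rw [MulAction.mem_stabilizer_iff, ← p.equivariant, hg₂']
      have hpe : p.toGrp g₁ = p.toGrp g₂ := by
        apply hinjα hp₁ hp₂
        rw [hcommG, hcommG, heq]
      exact hGinj (Prod.ext hpe heq)
    · ext a
      simp only [Subgroup.mem_map]
      constructor
      · rintro ⟨g, hg, rfl⟩
        have hg' : g • z = z := hg
        rw [MulAction.mem_stabilizer_iff, ← αhat.equivariant, hg']
      · intro ha
        have ha' : a • αhat.toSp z = αhat.toSp z := ha
        have hφa : φ₀.toGrp a ∈ MulAction.stabilizer A.G (α.toSp (p.toSp z)) := by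
          rw [MulAction.mem_stabilizer_iff, hcommT, ← φ₀.equivariant, ha']
        rw [← hmapα, Subgroup.mem_map] at hφa
        obtain ⟨b, hb, hab⟩ := hφa
        obtain ⟨g, hgp, hga⟩ := hGsurj b a hab
        refine ⟨g, ?_, hga⟩
        have hb' : b • p.toSp z = p.toSp z := hb
        have : g • z = z := by
          apply hTinj
          refine Prod.ext ?_ ?_ <;> simp only
          · rw [p.equivariant, hgp, hb']
          · rw [αhat.equivariant, hga, ha']
        exact this
  refine ⟨⟨hsurjG, hsurjT, ?_⟩, key, ?_⟩
  · intro x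
    obtain ⟨z, hz⟩ := hsurjT x
    exact ⟨z, hz, hz ▸ (key z).2⟩
  · -- the orbit map is a homeomorphism
    have hproper : ProperSMul Ahat.G Ahat.T :=
      ⟨((continuous_fst.smul continuous_snd).prodMk continuous_snd).isProperMap⟩
    haveI : T2Space (Quotient (MulAction.orbitRel Ahat.G Ahat.T)) :=
      t2Space_quotient_mulAction_of_properSMul
    rw [isHomeomorph_iff_continuous_bijective]
    refine ⟨?_, ?_, ?_⟩
    · exact (continuous_quotient_mk'.comp αhat.contSp).quotient_lift _
    · -- injectivity
      intro q₁ q₂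
      induction q₁ using Quotient.ind with | _ z₁ => ?_
      induction q₂ using Quotient.ind with | _ z₂ => ?_
      intro h
      have h' : αhat.toSp z₁ ∈ MulAction.orbit Ahat.G (αhat.toSp z₂) :=
        Quotient.exact h
      obtain ⟨a, ha0⟩ := h'
      have ha : a • αhat.toSp z₂ = αhat.toSp z₁ := ha0
      -- same orbit downstairs in X
      have hX : α.toSp (p.toSp z₁) ∈ MulAction.orbit A.G (α.toSp (p.toSp z₂)) := by
        refine ⟨φ₀.toGrp a, ?_⟩
        simp only
        rw [hcommT, hcommT, ← φ₀.equivariant, ha]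
      -- hence p z₁ and p z₂ are in the same B-orbit
      have hY : Quotient.mk (MulAction.orbitRel B.G B.T) (p.toSp z₁)
          = Quotient.mk (MulAction.orbitRel B.G B.T) (p.toSp z₂) := by
        apply hhomeo.bijective.injective
        exact Quotient.sound hX
      obtain ⟨b, hb⟩ := Quotient.exact hY
      have hb' : b • p.toSp z₂ = p.toSp z₁ := hb
      -- adjust b by an element of the stabilizer so that α b = φ₀ a
      have hdiff : (α.toGrp b)⁻¹ * φ₀.toGrp a
          ∈ MulAction.stabilizer A.G (α.toSp (p.toSp z₂)) := by
        rw [MulAction.mem_stabilizer_iff, mul_smul, inv_smul_eq_iff]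
        have h1 : φ₀.toGrp a • α.toSp (p.toSp z₂) = α.toSp (p.toSp z₁) := by
          rw [hcommT, hcommT, ← φ₀.equivariant, ha]
        have h2 : α.toGrp b • α.toSp (p.toSp z₂) = α.toSp (p.toSp z₁) := by
          rw [← α.equivariant, hb']
        rw [h1, h2]
      rw [← (hstab (p.toSp z₂)).2, Subgroup.mem_map] at hdiff
      obtain ⟨c, hc, hceq⟩ := hdiff
      have hc' : c • p.toSp z₂ = p.toSp z₂ := hc
      obtain ⟨g, hgp, hga⟩ := hGsurj (b * c) a (by
        rw [map_mul, hceq, mul_inv_cancel_left])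
      apply Quotient.sound
      refine ⟨g, ?_⟩
      apply hTinj
      refine Prod.ext ?_ ?_ <;> simp only
      · rw [p.equivariant, hgp, mul_smul, hc', hb']
      · rw [αhat.equivariant, hga, ha]
    · -- surjectivity
      intro q
      induction q using Quotient.ind with | _ x => ?_
      obtain ⟨z, hz⟩ := hsurjT x
      exact ⟨Quotient.mk _ z, congrArg _ hz⟩
end

section
/- Let φ: (G,T) → (A,X) and α: (B,Y) → (A,X) be morphisms of piles, with (B,Y) and (A,X) finite piles, and let ψ: G → B be a continuous group homomorphism with α ∘ ψ = φ as group homomorphisms. Then ψ can be completed by a continuous map ψ: T → Y to a morphism of piles ψ: (G,T) → (B,Y) satisfying α ∘ ψ = φ if and only if for every t ∈ T there is y ∈ Y such that α(y) = φ(t) and ψ(G_t) ≤ B_y. -/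
open Pointwise

section Aux

open Set Pointwise

lemma isClopen_exists_smul_mem {G T : Type*} [Group G] [TopologicalSpace G] [IsTopologicalGroup G]
    [CompactSpace G] [TopologicalSpace T] [T2Space T] [CompactSpace T]
    [MulAction G T] [ContinuousSMul G T] {S : Set G} {U : Set T}
    (hS : IsClosed S) (hU : IsClopen U) :
    IsClopen {x : T | ∃ s ∈ S, s • x ∈ U} := by
  constructor
  · have himg : {x : T | ∃ s ∈ S, s • x ∈ U} = (fun p : G × T => p.1⁻¹ • p.2) '' (S ×ˢ U) := by
      ext x
      simp only [mem_setOf_eq, mem_image, mem_prod, Prod.exists]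
      constructor
      · rintro ⟨s, hs, hm⟩
        exact ⟨s, s • x, ⟨hs, hm⟩, by simp⟩
      · rintro ⟨s, u, ⟨hs, hu⟩, rfl⟩
        exact ⟨s, hs, by simpa using hu⟩
    rw [himg]
    exact ((hS.isCompact.prod hU.1.isCompact).image
      (continuous_fst.inv.smul continuous_snd)).isClosed
  · have hunion : {x : T | ∃ s ∈ S, s • x ∈ U} = ⋃ s ∈ S, (s • ·) ⁻¹' U := by
      ext x; simp
    rw [hunion]
    exact isOpen_biUnion fun s _ => hU.2.preimage (continuous_const_smul s)

lemma isClopen_forall_smul_mem {G T : Type*} [Group G] [TopologicalSpace G] [IsTopologicalGroup G]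
    [CompactSpace G] [TopologicalSpace T] [T2Space T] [CompactSpace T]
    [MulAction G T] [ContinuousSMul G T] {S : Set G} {U : Set T}
    (hS : IsClosed S) (hU : IsClopen U) :
    IsClopen {x : T | ∀ s ∈ S, s • x ∈ U} := by
  have h : {x : T | ∀ s ∈ S, s • x ∈ U} = {x : T | ∃ s ∈ S, s • x ∈ Uᶜ}ᶜ := by
    ext x; simp
  rw [h]
  exact (isClopen_exists_smul_mem hS hU.compl).compl

lemma exists_isClopen_separating {X : Type*} [TopologicalSpace X] [CompactSpace X] [T2Space X]
    [TotallyDisconnectedSpace X] {C D : Set X} (hC : IsCompact C) (hD : IsCompact D)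
    (hCD : Disjoint C D) : ∃ V : Set X, IsClopen V ∧ C ⊆ V ∧ Disjoint V D := by
  have hDc : IsOpen Dᶜ := hD.isClosed.isOpen_compl
  have hmem : ∀ x ∈ C, ∃ V : Set X, IsClopen V ∧ x ∈ V ∧ V ⊆ Dᶜ := fun x hx =>
    compact_exists_isClopen_in_isOpen hDc (Set.disjoint_left.mp hCD hx)
  choose! V hV1 hV2 hV3 using hmem
  obtain ⟨b, hbsub, hbfin, hcover⟩ := hC.elim_finite_subcover_image
    (fun x hx => (hV1 x hx).2) (fun x hx => Set.mem_biUnion hx (hV2 x hx))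
  refine ⟨⋃ x ∈ b, V x, hbfin.isClopen_biUnion (fun x hx => hV1 x (hbsub hx)), hcover, ?_⟩
  rw [Set.disjoint_left]
  intro a ha haD
  obtain ⟨x, hx, hax⟩ := Set.mem_iUnion₂.mp ha
  exact hV3 x (hbsub hx) hax haD

end Aux

/-- Let `φ : (G,T) → (A,X)` and `α : (B,Y) → (A,X)` be morphisms of piles, with `(B,Y)` and
`(A,X)` finite piles, and let `ψ₀ : G → B` be a continuous group homomorphism with
`α ∘ ψ₀ = φ` on groups. Then `ψ₀` can be completed by a continuous map `T → Y` to a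
morphism of piles `ψ` with `α ∘ ψ = φ` if and only if for every `t ∈ T` there is `y ∈ Y`
with `α(y) = φ(t)` and `ψ₀(G_t) ≤ B_y`. -/
theorem completion_of_solution
    (P B A : Pile) (hB : B.IsFinite) (hA : A.IsFinite)
    (φ : PileHom P A) (α : PileHom B A)
    (ψ₀ : P.G →* B.G) (hcont : Continuous ψ₀)
    (hcomp : ∀ g : P.G, α.toGrp (ψ₀ g) = φ.toGrp g) :
    (∃ ψ : PileHom P B, ψ.toGrp = ψ₀ ∧ α.comp ψ = φ) ↔
      ∀ t : P.T, ∃ y : B.T, α.toSp y = φ.toSp t ∧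
        (MulAction.stabilizer P.G t).map ψ₀ ≤ MulAction.stabilizer B.G y := by
  classical
  haveI hBG := hB.1
  haveI hBT := hB.2
  haveI hAT := hA.2
  constructor
  · rintro ⟨ψ, hψ, hc⟩ t
    refine ⟨ψ.toSp t, ?_, ?_⟩
    · exact congrFun (congrArg PileHom.toSp hc) t
    · intro b hb
      obtain ⟨g, hg, rfl⟩ := Subgroup.mem_map.mp hb
      rw [MulAction.mem_stabilizer_iff, ← hψ, ← ψ.equivariant,
        MulAction.mem_stabilizer_iff.mp hg]
  · intro h
    rcases isEmpty_or_nonempty B.T with hBE | hBNe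
    · haveI : IsEmpty P.T := ⟨fun t => IsEmpty.false (h t).choose⟩
      have hco : Continuous (fun t : P.T => (isEmptyElim t : B.T)) := by
        refine continuous_def.mpr fun s _ => ?_
        rw [Set.eq_empty_of_isEmpty ((fun t : P.T => (isEmptyElim t : B.T)) ⁻¹' s)]
        exact isOpen_empty
      refine ⟨⟨ψ₀, hcont, fun t => isEmptyElim t, hco, fun g t => isEmptyElim t⟩, rfl, ?_⟩
      exact PileHom.ext' (MonoidHom.ext hcomp) (funext fun t => isEmptyElim t)
    · -- main case
      have key : ∀ t : P.T, ∃ (O : Set P.T) (f : P.T → B.T),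
          IsClopen O ∧ t ∈ O ∧ (∀ (g : P.G) (x : P.T), x ∈ O → g • x ∈ O) ∧ Continuous f ∧
          (∀ (g : P.G) (x : P.T), x ∈ O → f (g • x) = ψ₀ g • f x) ∧
          (∀ x ∈ O, α.toSp (f x) = φ.toSp x) := by
        intro t
        obtain ⟨y, hy1, hy2⟩ := h t
        set S : Set P.G :=
          ψ₀ ⁻¹' ((MulAction.stabilizer B.G y : Subgroup B.G) : Set B.G) with hSdef
        have hSmem : ∀ g : P.G, g ∈ S ↔ ψ₀ g • y = y := fun g => by
          rw [hSdef]
          exact MulAction.mem_stabilizer_iff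
        have hS1 : (1 : P.G) ∈ S := by rw [hSmem]; simp
        have hstabS : ∀ g : P.G, g • t = t → g ∈ S := by
          intro g hg
          have hm : ψ₀ g ∈ MulAction.stabilizer B.G y :=
            hy2 (Subgroup.mem_map.mpr ⟨g, MulAction.mem_stabilizer_iff.mpr hg, rfl⟩)
          rw [hSmem]
          exact MulAction.mem_stabilizer_iff.mp hm
        have hSclosed : IsClosed S := (isClosed_discrete _).preimage hcont
        have hSopen : IsOpen S := (isOpen_discrete _).preimage hcont
        have hmt : Continuous fun g : P.G => g • t := continuous_id.smul continuous_const
        have hC1 : IsCompact ((fun g : P.G => g • t) '' S) :=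
          (hSclosed.isCompact).image hmt
        have hC2 : IsCompact ((fun g : P.G => g • t) '' Sᶜ) :=
          (hSopen.isClosed_compl.isCompact).image hmt
        have hdisj : Disjoint ((fun g : P.G => g • t) '' S) ((fun g : P.G => g • t) '' Sᶜ) := by
          rw [Set.disjoint_left]
          rintro x ⟨s, hs, rfl⟩ ⟨g, hg, heq⟩
          apply hg
          have heq' : g • t = s • t := heq
          have h1 : (s⁻¹ * g) • t = t := by
            rw [mul_smul, heq', inv_smul_smul]
          have h2 : s⁻¹ * g ∈ S := hstabS _ h1
          have h3 : s * (s⁻¹ * g) ∈ S := by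
            rw [hSmem] at hs h2 ⊢
            rw [map_mul, mul_smul, h2, hs]
          simpa using h3
        obtain ⟨V, hV, hCV, hVD⟩ := exists_isClopen_separating hC1 hC2 hdisj
        set Z : Set P.T := φ.toSp ⁻¹' {φ.toSp t} with hZdef
        have hZ : IsClopen Z := (isClopen_discrete _).preimage φ.contSp
        set W : Set P.T :=
          {x : P.T | ∀ s ∈ S, s • x ∈ V ∩ Z} ∩ {x : P.T | ∀ g ∈ Sᶜ, g • x ∈ Vᶜ} with hWdef
        have hW : IsClopen W :=
          (isClopen_forall_smul_mem hSclosed (hV.inter hZ)).inter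
            (isClopen_forall_smul_mem hSopen.isClosed_compl hV.compl)
        have htW : t ∈ W := by
          constructor
          · intro s hs
            refine ⟨hCV ⟨s, hs, rfl⟩, ?_⟩
            show φ.toSp (s • t) = φ.toSp t
            calc φ.toSp (s • t) = φ.toGrp s • φ.toSp t := φ.equivariant s t
              _ = α.toGrp (ψ₀ s) • α.toSp y := by rw [hcomp, hy1]
              _ = α.toSp (ψ₀ s • y) := (α.equivariant _ _).symm
              _ = α.toSp y := by rw [(hSmem s).mp hs]
              _ = φ.toSp t := hy1
          · intro g hg hmem
            exact Set.disjoint_left.mp hVD hmem ⟨g, hg, rfl⟩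
        have hWV : ∀ x ∈ W, x ∈ V ∩ Z := fun x hx => by
          simpa using hx.1 1 hS1
        have hK : ∀ (g : P.G) (x : P.T), x ∈ W → g • x ∈ W → ψ₀ g • y = y := by
          intro g x hx hgx
          by_cases hg : g ∈ S
          · exact (hSmem g).mp hg
          · exact absurd (hWV _ hgx).1 (hx.2 g hg)
        set O : Set P.T := {x : P.T | ∃ k : P.G, k • x ∈ W} with hOdef
        have hO : IsClopen O := by
          have he : O = {x : P.T | ∃ k ∈ (Set.univ : Set P.G), k • x ∈ W} := by
            ext x; simp [hOdef]
          rw [he]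
          exact isClopen_exists_smul_mem isClosed_univ hW
        set f : P.T → B.T :=
          fun x => if hx : ∃ k : P.G, k • x ∈ W then ψ₀ (Classical.choose hx)⁻¹ • y else y
          with hfdef
        have fval : ∀ (g : P.G) (x : P.T), g • x ∈ W → f x = ψ₀ g⁻¹ • y := by
          intro g x hgx
          have hx : ∃ k : P.G, k • x ∈ W := ⟨g, hgx⟩
          have hg'W : (Classical.choose hx) • x ∈ W := Classical.choose_spec hx
          have hk : ψ₀ (g * (Classical.choose hx)⁻¹) • y = y := by
            refine hK (g * (Classical.choose hx)⁻¹) ((Classical.choose hx) • x) hg'W ?_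
            rw [smul_smul, inv_mul_cancel_right]
            exact hgx
          have e1 : ψ₀ g⁻¹ • ψ₀ (g * (Classical.choose hx)⁻¹) • y
              = ψ₀ (Classical.choose hx)⁻¹ • y := by
            rw [smul_smul, ← map_mul, inv_mul_cancel_left]
          simp only [hfdef]
          rw [dif_pos hx, ← e1, hk]
        have htO : t ∈ O := ⟨1, by simpa using htW⟩
        have hOinv : ∀ (g : P.G) (x : P.T), x ∈ O → g • x ∈ O := by
          rintro g x ⟨k, hk⟩
          exact ⟨k * g⁻¹, by rwa [smul_smul, inv_mul_cancel_right]⟩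
        have hcontf : Continuous f := by
          apply IsLocallyConstant.continuous
          rw [IsLocallyConstant.iff_exists_open]
          intro x
          by_cases hx : ∃ k : P.G, k • x ∈ W
          · obtain ⟨k, hk⟩ := hx
            refine ⟨(k • ·) ⁻¹' W, hW.2.preimage (continuous_const_smul k), hk, ?_⟩
            intro x' hx'
            rw [fval k x' hx', fval k x hk]
          · refine ⟨Oᶜ, hO.1.isOpen_compl, hx, ?_⟩
            intro x' hx'
            have hx'' : ¬∃ k : P.G, k • x' ∈ W := hx'
            simp only [hfdef]
            rw [dif_neg hx'', dif_neg hx]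
        have hequiv : ∀ (g : P.G) (x : P.T), x ∈ O → f (g • x) = ψ₀ g • f x := by
          rintro g x ⟨k, hk⟩
          have h1 : f x = ψ₀ k⁻¹ • y := fval k x hk
          have h2 : f (g • x) = ψ₀ (k * g⁻¹)⁻¹ • y :=
            fval (k * g⁻¹) (g • x) (by rwa [smul_smul, inv_mul_cancel_right])
          rw [h1, h2, smul_smul, ← map_mul, mul_inv_rev, inv_inv]
        have hαf : ∀ x ∈ O, α.toSp (f x) = φ.toSp x := by
          rintro x ⟨k, hk⟩
          rw [fval k x hk]
          have hz : φ.toSp (k • x) = φ.toSp t := (hWV _ hk).2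
          have hxval : φ.toSp x = (φ.toGrp k)⁻¹ • φ.toSp t := by
            rw [← hz, φ.equivariant, inv_smul_smul]
          rw [α.equivariant, hy1, hxval]
          congr 1
          rw [hcomp, map_inv]
        exact ⟨O, f, hO, htO, hOinv, hcontf, hequiv, hαf⟩
      choose Os fs hOs htOs hinvs hconts hequivs hαs using key
      have main : ∀ s : Finset P.T, ∃ (O' : Set P.T) (f' : P.T → B.T),
          (∀ (g : P.G) (x : P.T), x ∈ O' → g • x ∈ O') ∧ Continuous f' ∧
          (∀ (g : P.G) (x : P.T), x ∈ O' → f' (g • x) = ψ₀ g • f' x) ∧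
          (∀ x ∈ O', α.toSp (f' x) = φ.toSp x) ∧ IsClopen O' ∧ ∀ u ∈ s, Os u ⊆ O' := by
        intro s
        induction s using Finset.induction_on with
        | empty =>
          refine ⟨∅, fun _ => Classical.arbitrary B.T, ?_, continuous_const, ?_, ?_, isClopen_empty, ?_⟩
          · exact fun g x hx => absurd hx (Set.notMem_empty x)
          · exact fun g x hx => absurd hx (Set.notMem_empty x)
          · exact fun x hx => absurd hx (Set.notMem_empty x)
          · exact fun u hu => absurd hu (Finset.notMem_empty u)
        | @insert u s hus ih =>
          obtain ⟨O₁, f₁, hinv₁, hcont₁, hequiv₁, hα₁, hclopen₁, hcov₁⟩ := ih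
          refine ⟨Os u ∪ O₁, (Os u).piecewise (fs u) f₁, ?_, ?_, ?_, ?_, (hOs u).union hclopen₁, ?_⟩
          · intro g x hx
            rcases hx with hx | hx
            · exact Or.inl (hinvs u g x hx)
            · exact Or.inr (hinv₁ g x hx)
          · refine Continuous.piecewise ?_ (hconts u) hcont₁
            intro a ha
            rw [(hOs u).frontier_eq] at ha
            exact absurd ha (Set.notMem_empty a)
          · intro g x hx
            by_cases hxu : x ∈ Os u
            · rw [Set.piecewise_eq_of_mem _ _ _ hxu,
                Set.piecewise_eq_of_mem _ _ _ (hinvs u g x hxu)]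
              exact hequivs u g x hxu
            · have hgxu : g • x ∉ Os u := by
                intro hc
                have := hinvs u g⁻¹ _ hc
                rw [inv_smul_smul] at this
                exact hxu this
              have hx₁ : x ∈ O₁ := hx.resolve_left hxu
              rw [Set.piecewise_eq_of_notMem _ _ _ hxu,
                Set.piecewise_eq_of_notMem _ _ _ hgxu]
              exact hequiv₁ g x hx₁
          · intro x hx
            by_cases hxu : x ∈ Os u
            · rw [Set.piecewise_eq_of_mem _ _ _ hxu]
              exact hαs u x hxu
            · rw [Set.piecewise_eq_of_notMem _ _ _ hxu]
              exact hα₁ x (hx.resolve_left hxu)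
          · intro v hv
            rcases Finset.mem_insert.mp hv with rfl | hv
            · exact Set.subset_union_left
            · exact (hcov₁ v hv).trans Set.subset_union_right
      obtain ⟨s, hs⟩ := isCompact_univ.elim_finite_subcover Os (fun u => (hOs u).2)
        (fun x _ => Set.mem_iUnion.mpr ⟨x, htOs x⟩)
      obtain ⟨O', f', hinv', hcont', hequiv', hα', hclopen', hcov'⟩ := main s
      have huniv : ∀ x : P.T, x ∈ O' := by
        intro x
        obtain ⟨u, hu, hx⟩ := Set.mem_iUnion₂.mp (hs (Set.mem_univ x))
        exact hcov' u hu hx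
      refine ⟨⟨ψ₀, hcont, f', hcont', fun g x => hequiv' g x (huniv x)⟩, rfl, ?_⟩
      exact PileHom.ext' (MonoidHom.ext hcomp) (funext fun x => hα' x (huniv x))
end
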